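/- Let u, v, w be vertices of a finite simple graph Γ. If st(u) ⊆ st(v) and lk(v) ⊆ lk(w) (i.e. u ≤_t v and v ≤_f w), then v = u or v = w. -/
import Mathlib

/-- The star of a vertex: the vertex together with its neighbors. -/
def gstar {V : Type*} (Γ : SimpleGraph V) (v : V) : Set V :=
  insert v (Γ.neighborSet v)

/-- If `st(u) ⊆ st(v)` (i.e. `u ≤_t v`) and `lk(v) ⊆ lk(w)` (i.e. `v ≤_f w`),
then `v = u` or `v = w`. -/
theorem stmt_0 {V : Type*} [Fintype V] (Γ : SimpleGraph V) (u v w : V)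
    (hut : gstar Γ u ⊆ gstar Γ v)
    (hvf : Γ.neighborSet v ⊆ Γ.neighborSet w) :
    v = u ∨ v = w := by
  by_cases huv : v = u
  · exact Or.inl huv
  · -- u ∈ gstar Γ u ⊆ gstar Γ v, and u ≠ v, so u adjacent to v
    have hu : u ∈ gstar Γ v := hut (Set.mem_insert _ _)
    have hadj : Γ.Adj v u := by
      rcases hu with h | h
      · exact absurd h.symm huv
      · exact h
    -- u ∈ lk(v) ⊆ lk(w), so w adj u, so w ∈ lk(u) ⊆ st(v)
    have hwu : Γ.Adj w u := hvf hadj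
    have hw : w ∈ gstar Γ v := hut (Set.mem_insert_of_mem _ hwu.symm)
    rcases hw with h | h
    · exact Or.inr h.symm
    · -- w ∈ lk(v) ⊆ lk(w) gives w adj w, contradiction
      exact absurd (hvf h) (Γ.irrefl)
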